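/- arXiv:1608.08760 — 4 statements merged into one kernel-verified Lean document; each statement's English description precedes it below -/
import Mathlib

section
/- Let K > 0, α ∈ [0,1), and let γ : [0,∞) → [0,∞) be locally integrable with γ(t) ≥ K/(1+t)^α for all t ≥ t₀. Define Γ(t,τ) = ∫_τ^t γ(s) ds. Then there exists τ₀ ≥ t₀ such that for every τ ≥ τ₀, ∫_τ^∞ e^{-Γ(t,τ)} dt ≤ (2/K)(1+τ)^α. -/
open MeasureTheory Set Filter Real

open scoped Topology

/-!
The hypothesis gives `Γ(t, τ) ≥ P t - P τ` for `P t = K / (1 - α) * (1 + t) ^ (1 - α)`,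
a primitive of the lower bound of `γ`. Once `α (1 + t) ^ (α - 1) ≤ K / 2`, the comparison
integrand `exp (P τ - P t)` is dominated by the derivative of
`-(2 / K) (1 + t) ^ α exp (P τ - P t)`, which vanishes at infinity and equals
`-(2 / K) (1 + τ) ^ α` at `τ`.
-/

theorem integral_Ioi_le_sub_of_le_deriv {f F F' : ℝ → ℝ} {a L : ℝ}
    (hF : ∀ t ∈ Ici a, HasDerivAt F (F' t) t) (hf : ∀ t ∈ Ioi a, 0 ≤ f t)
    (hfF' : ∀ t ∈ Ioi a, f t ≤ F' t) (hlim : Tendsto F atTop (𝓝 L)) :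
    ∫ t in Ioi a, f t ≤ L - F a := by
  have hF'0 : ∀ t ∈ Ioi a, 0 ≤ F' t := fun t ht => (hf t ht).trans (hfF' t ht)
  rw [← integral_Ioi_of_hasDerivAt_of_nonneg' hF hF'0 hlim]
  refine integral_mono_of_nonneg ?_ (integrableOn_Ioi_deriv_of_nonneg' hF hF'0 hlim) ?_
  · filter_upwards [ae_restrict_mem measurableSet_Ioi] with t ht using hf t ht
  · filter_upwards [ae_restrict_mem measurableSet_Ioi] with t ht using hfF' t ht

noncomputable def primitiveOfLowerBound (K α t : ℝ) : ℝ := K / (1 - α) * (1 + t) ^ (1 - α)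

theorem hasDerivAt_primitiveOfLowerBound {K α t : ℝ} (hα : α ≠ 1) (ht : 0 < 1 + t) :
    HasDerivAt (primitiveOfLowerBound K α) (K / (1 + t) ^ α) t := by
  refine ((((hasDerivAt_id' t).const_add 1).rpow_const (p := 1 - α)
    (Or.inl ht.ne')).const_mul (K / (1 - α))).congr_deriv ?_
  have h1α : 1 - α ≠ 0 := sub_ne_zero.mpr hα.symm
  rw [show 1 - α - 1 = -α by ring, rpow_neg ht.le]
  field_simp

theorem hasDerivAt_one_add_rpow_mul_exp_neg {K α t : ℝ} {φ : ℝ → ℝ} (ht : 0 < 1 + t)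
    (hφ : HasDerivAt φ (K / (1 + t) ^ α) t) :
    HasDerivAt (fun s => (1 + s) ^ α * exp (-φ s)) ((α * (1 + t) ^ (α - 1) - K) * exp (-φ t))
      t := by
  refine ((((hasDerivAt_id' t).const_add 1).rpow_const (p := α) (Or.inl ht.ne')).fun_mul
    hφ.fun_neg.exp).congr_deriv ?_
  have : (1 + t) ^ α ≠ 0 := (rpow_pos_of_pos ht α).ne'
  field_simp
  ring

theorem tendsto_one_add_rpow_mul_exp_neg_atTop {K α : ℝ} (hK : 0 < K) (hα : α < 1) :
    Tendsto (fun t => (1 + t) ^ α * exp (-primitiveOfLowerBound K α t)) atTop (𝓝 0) := by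
  have h1α : 0 < 1 - α := sub_pos.mpr hα
  have hpow : Tendsto (fun t : ℝ => (1 + t) ^ (1 - α)) atTop atTop :=
    (tendsto_rpow_atTop h1α).comp (tendsto_atTop_add_const_left atTop 1 tendsto_id)
  refine ((tendsto_rpow_mul_exp_neg_mul_atTop_nhds_zero (α / (1 - α)) (K / (1 - α))
    (by positivity)).comp hpow).congr' ?_
  filter_upwards [eventually_gt_atTop (-1)] with t ht
  have h1t : 0 ≤ 1 + t := by linarith
  simp only [Function.comp_apply, primitiveOfLowerBound, ← rpow_mul h1t, neg_mul]
  rw [mul_div_cancel₀ α h1α.ne']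

theorem mul_rpow_sub_one_le_half {K α x : ℝ} (hK : 0 < K) (hα0 : 0 ≤ α) (hα1 : α < 1)
    (hx : (2 * α / K) ^ (1 / (1 - α)) ≤ x) : α * x ^ (α - 1) ≤ K / 2 := by
  obtain rfl | hα := hα0.eq_or_lt
  · simp only [zero_mul]; positivity
  have h1α : 0 < 1 - α := sub_pos.mpr hα1
  have hx0 : 0 < x := (rpow_pos_of_pos (by positivity) _).trans_le hx
  have hxpow : 2 * α / K ≤ x ^ (1 - α) := by
    calc 2 * α / K = ((2 * α / K) ^ (1 / (1 - α))) ^ (1 - α) := by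
          rw [← rpow_mul (by positivity), one_div_mul_cancel h1α.ne', rpow_one]
      _ ≤ x ^ (1 - α) := rpow_le_rpow (by positivity) hx h1α.le
  rw [show α - 1 = -(1 - α) by ring, rpow_neg hx0.le, ← div_eq_mul_inv,
    div_le_iff₀ (rpow_pos_of_pos hx0 _)]
  calc α = K / 2 * (2 * α / K) := by field_simp
    _ ≤ K / 2 * x ^ (1 - α) := by gcongr

theorem primitiveOfLowerBound_sub_le_integral {K α a b : ℝ} {γ : ℝ → ℝ} (hα : α ≠ 1)
    (ha : -1 < a) (hab : a ≤ b) (hγ : IntegrableOn γ (Icc a b))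
    (hlb : ∀ x ∈ Ioo a b, K / (1 + x) ^ α ≤ γ x) :
    primitiveOfLowerBound K α b - primitiveOfLowerBound K α a ≤ ∫ x in a..b, γ x := by
  have hderiv : ∀ x ∈ Icc a b, HasDerivAt (primitiveOfLowerBound K α) (K / (1 + x) ^ α) x :=
    fun x hx => hasDerivAt_primitiveOfLowerBound hα (by linarith [hx.1])
  exact intervalIntegral.sub_le_integral_of_hasDeriv_right_of_le hab
    (fun x hx => (hderiv x hx).continuousAt.continuousWithinAt)
    (fun x hx => (hderiv x (Ioo_subset_Icc_self hx)).hasDerivWithinAt) hγ hlb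

theorem integral_Ioi_le_of_le_exp_primitiveOfLowerBound_sub {K α τ : ℝ} {f : ℝ → ℝ}
    (hK : 0 < K) (hα : α < 1) (hτ : -1 < τ)
    (hsmall : ∀ t ∈ Ioi τ, α * (1 + t) ^ (α - 1) ≤ K / 2)
    (hf0 : ∀ t ∈ Ioi τ, 0 ≤ f t)
    (hf : ∀ t ∈ Ioi τ,
      f t ≤ exp (primitiveOfLowerBound K α τ - primitiveOfLowerBound K α t)) :
    ∫ t in Ioi τ, f t ≤ 2 / K * (1 + τ) ^ α := by
  set P := primitiveOfLowerBound K α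
  set c := -(2 / K) * exp (P τ)
  have hderiv : ∀ t ∈ Ici τ, HasDerivAt (fun s => c * ((1 + s) ^ α * exp (-P s)))
      (c * ((α * (1 + t) ^ (α - 1) - K) * exp (-P t))) t := fun t ht =>
    ((hasDerivAt_one_add_rpow_mul_exp_neg (by linarith [ht.out])
      (hasDerivAt_primitiveOfLowerBound hα.ne (by linarith [ht.out]))).const_mul c)
  have hlim := (tendsto_one_add_rpow_mul_exp_neg_atTop hK hα).const_mul c
  rw [mul_zero] at hlim
  convert integral_Ioi_le_sub_of_le_deriv hderiv hf0 (fun t ht => ?_) hlim using 1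
  · simp only [c, exp_neg]
    field_simp
    ring
  calc f t ≤ exp (P τ - P t) := hf t ht
    _ = 1 * (exp (P τ) * exp (-P t)) := by rw [one_mul, ← exp_add, sub_eq_add_neg]
    _ ≤ 2 / K * (K - α * (1 + t) ^ (α - 1)) * (exp (P τ) * exp (-P t)) := by
      gcongr
      rw [div_mul_eq_mul_div, le_div_iff₀ hK]
      linarith [hsmall t ht]
    _ = c * ((α * (1 + t) ^ (α - 1) - K) * exp (-P t)) := by ring

theorem exp_neg_Gamma_integral_bound_general
    (K α t₀ : ℝ) (hK : 0 < K) (hα0 : 0 ≤ α) (hα1 : α < 1)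
    (γ : ℝ → ℝ)
    (hγloc : LocallyIntegrableOn γ (Ici 0))
    (hγlb : ∀ t ≥ t₀, γ t ≥ K / (1 + t) ^ α) :
    ∃ τ₀ ≥ t₀, ∀ τ ≥ τ₀,
      (∫ t in Ioi τ, Real.exp (-(∫ s in τ..t, γ s))) ≤ (2 / K) * (1 + τ) ^ α := by
  set M := (2 * α / K) ^ (1 / (1 - α))
  have hM : 0 ≤ M := rpow_nonneg (by positivity) _
  refine ⟨max t₀ M, le_max_left _ _, fun τ hτ => ?_⟩
  have hτt₀ : t₀ ≤ τ := (le_max_left _ _).trans hτ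
  have hτM : M ≤ τ := (le_max_right _ _).trans hτ
  refine integral_Ioi_le_of_le_exp_primitiveOfLowerBound_sub hK hα1 (by linarith)
    (fun t ht => mul_rpow_sub_one_le_half hK hα0 hα1 (by linarith [ht.out]))
    (fun t _ => (exp_pos _).le) (fun t ht => exp_le_exp.2 ?_)
  have hΓ := primitiveOfLowerBound_sub_le_integral hα1.ne (by linarith) ht.out.le
    (hγloc.integrableOn_compact_subset (fun s hs => hM.trans (hτM.trans hs.1)) isCompact_Icc)
    (fun x hx => hγlb x (by linarith [hx.1]))
  linarith

theorem exp_neg_Gamma_integral_bound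
    (K α t₀ : ℝ) (hK : 0 < K) (hα0 : 0 ≤ α) (hα1 : α < 1) (ht₀ : 0 ≤ t₀)
    (γ : ℝ → ℝ) (hγnn : ∀ t ≥ (0:ℝ), 0 ≤ γ t)
    (hγloc : LocallyIntegrableOn γ (Ici 0))
    (hγlb : ∀ t ≥ t₀, γ t ≥ K / (1 + t) ^ α) :
    ∃ τ₀ ≥ t₀, ∀ τ ≥ τ₀,
      (∫ t in Ioi τ, Real.exp (-(∫ s in τ..t, γ s))) ≤ (2 / K) * (1 + τ) ^ α :=
  exp_neg_Gamma_integral_bound_general K α t₀ hK hα0 hα1 γ hγloc hγlb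
end

section
/- Let K > 0, α ∈ [0,1), ν ∈ (0, 1+α), and suppose γ : [0,∞) → [0,∞) is absolutely continuous with γ(t) ≥ K/(1+t)^α and ((1+t)^α γ(t))' ≤ 0 almost everywhere for t ≥ t₀. Writing λ_ν(t) = (1+t)^ν, there exists t₄ ≥ t₀ such that for almost every t ≥ t₄: -λ_ν'''(t) + (λ_ν' γ)'(t) ≤ -μ (1+t)^{ν-2-α}, where μ = νK(1+α-ν)/2 > 0. -/
/-!
Write `s = 1 + t`. Splitting `ν (ν - 1) s^(ν-2) γ = ν α s^(ν-2) γ + ν (ν - 1 - α) s^(ν-2) γ`, the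
expression factors as `ν s^(ν-2-α)` times
`-(ν - 1)(ν - 2) s^(α-1) + s · ((s^α γ)') + (ν - 1 - α) s^α γ`.
The middle term is `≤ 0` by monotonicity, the last is `≤ -(1 + α - ν) K` since `s^α γ ≥ K`, and the
first tends to `0` because `α < 1`, so for large `t` it is at most half of `(1 + α - ν) K`.
-/

open MeasureTheory Set Filter Real Topology

lemma eventually_mul_rpow_le_of_neg (C : ℝ) {a c : ℝ} (ha : a < 0) (hc : 0 < c) :
    ∀ᶠ s in atTop, C * s ^ a ≤ c := by
  have hlim : Tendsto (fun s : ℝ => C * s ^ a) atTop (𝓝 0) := by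
    simpa [neg_neg, mul_zero] using (tendsto_rpow_neg_atTop (neg_pos.2 ha)).const_mul C
  exact hlim.eventually (ge_mem_nhds hc)

lemma third_deriv_estimate_at {K α ν s g g' : ℝ} (hs : 0 < s) (hν0 : 0 < ν)
    (hν1 : ν < 1 + α) (hg : K / s ^ α ≤ g)
    (hmono : α * s ^ (α - 1) * g + s ^ α * g' ≤ 0)
    (hsmall : -((ν - 1) * (ν - 2)) * s ^ (α - 1) ≤ K * (1 + α - ν) / 2) :
    -(ν * (ν - 1) * (ν - 2) * s ^ (ν - 3)) +
        (ν * (ν - 1) * s ^ (ν - 2) * g + ν * s ^ (ν - 1) * g')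
      ≤ -(ν * K * (1 + α - ν) / 2) * s ^ (ν - 2 - α) := by
  set p := s ^ (ν - 2 - α)
  set q := s ^ (α - 1)
  have hp : 0 < p := rpow_pos_of_pos hs _
  have pow_eq (b : ℝ) (k : ℕ) (hb : b = ν - 2 - α + (α - 1) + k) :
      s ^ b = p * q * s ^ k := by
    rw [hb, rpow_add hs, rpow_add hs, rpow_natCast]
  have hα : s ^ α = q * s := by
    rw [← rpow_add_one hs.ne', sub_add_cancel]
  rw [pow_eq (ν - 3) 0 (by push_cast; ring), pow_eq (ν - 2) 1 (by push_cast; ring),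
    pow_eq (ν - 1) 2 (by push_cast; ring)]
  rw [hα] at hmono hg
  have hK : K ≤ s * q * g := by
    rw [div_le_iff₀ (by positivity), mul_comm q s] at hg; linarith
  have hbracket : -((ν - 1) * (ν - 2)) * q + s * (α * q * g + q * s * g')
      + (ν - 1 - α) * (s * q * g) ≤ -(K * (1 + α - ν) / 2) := by
    linarith [mul_nonpos_of_nonneg_of_nonpos hs.le hmono,
      mul_le_mul_of_nonpos_left hK (by linarith : ν - 1 - α ≤ 0)]
  have key := mul_le_mul_of_nonneg_left hbracket (mul_pos hν0 hp).le
  linear_combination key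

theorem third_deriv_estimate_general
    (K α t₀ ν : ℝ) (hK : 0 < K) (hα1 : α < 1)
    (hν0 : 0 < ν) (hν1 : ν < 1 + α)
    (γ γ' : ℝ → ℝ)
    (hγlb : ∀ t ≥ t₀, γ t ≥ K / (1 + t) ^ α)
    (h2 : ∀ᵐ t ∂(volume.restrict (Ici t₀)),
      α * (1 + t) ^ (α - 1) * γ t + (1 + t) ^ α * γ' t ≤ 0) :
    ∃ t₄ ≥ t₀, ∀ᵐ t ∂(volume.restrict (Ici t₄)),
      -(ν * (ν - 1) * (ν - 2) * (1 + t) ^ (ν - 3)) +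
        (ν * (ν - 1) * (1 + t) ^ (ν - 2) * γ t + ν * (1 + t) ^ (ν - 1) * γ' t)
      ≤ -(ν * K * (1 + α - ν) / 2) * (1 + t) ^ (ν - 2 - α) := by
  have hlarge : ∀ᶠ t in atTop, 0 < 1 + t ∧
      -((ν - 1) * (ν - 2)) * (1 + t) ^ (α - 1) ≤ K * (1 + α - ν) / 2 :=
    (tendsto_atTop_add_const_left atTop 1 tendsto_id).eventually
      ((eventually_gt_atTop 0).and
        (eventually_mul_rpow_le_of_neg _ (by linarith) (by nlinarith)))
  obtain ⟨T, hT⟩ := eventually_atTop.1 hlarge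
  refine ⟨max t₀ T, le_max_left _ _, ?_⟩
  filter_upwards [ae_restrict_of_ae_restrict_of_subset (Ici_subset_Ici.2 (le_max_left _ _)) h2,
    ae_restrict_mem measurableSet_Ici] with t hmono ht
  obtain ⟨hs, hsmall⟩ := hT t (le_of_max_le_right ht)
  exact third_deriv_estimate_at hs hν0 hν1 (hγlb t (le_of_max_le_left ht)) hmono hsmall

theorem third_deriv_estimate
    (K α t₀ ν : ℝ) (hK : 0 < K) (hα0 : 0 ≤ α) (hα1 : α < 1) (ht₀ : 0 ≤ t₀)
    (hν0 : 0 < ν) (hν1 : ν < 1 + α)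
    (γ γ' : ℝ → ℝ) (hγnn : ∀ t ≥ (0:ℝ), 0 ≤ γ t)
    (hγderiv : ∀ᵐ t ∂(volume.restrict (Ici t₀)), HasDerivAt γ (γ' t) t)
    (hγlb : ∀ t ≥ t₀, γ t ≥ K / (1 + t) ^ α)
    (h2 : ∀ᵐ t ∂(volume.restrict (Ici t₀)),
      α * (1 + t) ^ (α - 1) * γ t + (1 + t) ^ α * γ' t ≤ 0) :
    ∃ t₄ ≥ t₀, ∀ᵐ t ∂(volume.restrict (Ici t₄)),
      -(ν * (ν - 1) * (ν - 2) * (1 + t) ^ (ν - 3)) +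
        (ν * (ν - 1) * (1 + t) ^ (ν - 2) * γ t + ν * (1 + t) ^ (ν - 1) * γ' t)
      ≤ -(ν * K * (1 + α - ν) / 2) * (1 + t) ^ (ν - 2 - α) :=
  third_deriv_estimate_general K α t₀ ν hK hα1 hν0 hν1 γ γ' hγlb h2
end

section
/- (Opial's lemma) Let H be a real Hilbert space, x : [t₀,∞) → H, and S ⊆ H nonempty. Assume: (i) whenever t_n → ∞ and x(t_n) converges weakly to some point x̄, then x̄ ∈ S; (ii) for every z ∈ S the limit lim_{t→∞} ‖x(t) − z‖ exists. Then there exists z_∞ ∈ S such that x(t) converges weakly to z_∞ as t → ∞. -/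
/-!
Bounded sequences in a Hilbert space have weakly convergent subsequences (sequential
Banach–Alaoglu on the separable closed span, transported by the Riesz map). The trajectory is
eventually bounded because `‖x t - z₀‖` converges, so every sequence of times tending to `∞`
has a subsequence along which `x` converges weakly, and by (i) the limit lies in `S`.
Two such limits `z, w ∈ S` coincide: by polarization `⟪x t, z - w⟫` is an affine combination
of `‖x t - z‖²` and `‖x t - w‖²`, so by (ii) it converges, forcing `⟪z, z - w⟫ = ⟪w, z - w⟫`.
Hence every sequence of times has a subsequence along which `x` converges weakly to the same
point, which is weak convergence of `x`.
-/

open Filter Topology TopologicalSpace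
open scoped InnerProductSpace

theorem Filter.Tendsto.exists_eventually_norm_le {E α : Type*} [SeminormedAddCommGroup E]
    {l : Filter α} {x : α → E} {z : E} {a : ℝ} (h : Tendsto (fun t => ‖x t - z‖) l (𝓝 a)) :
    ∃ C, ∀ᶠ t in l, ‖x t‖ ≤ C :=
  ⟨a + 1 + ‖z‖, (h.eventually (gt_mem_nhds (lt_add_one a))).mono fun t ht => by
    linarith [norm_le_insert' (x t) z]⟩

section

variable {H : Type*} [NormedAddCommGroup H] [InnerProductSpace ℝ H]

def TendstoWeakly {α : Type*} (u : α → H) (l : Filter α) (v : H) : Prop :=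
  ∀ y : H, Tendsto (fun a => ⟪u a, y⟫_ℝ) l (𝓝 ⟪v, y⟫_ℝ)

theorem exists_tendstoWeakly_subseq_of_separableSpace [CompleteSpace H] [SeparableSpace H]
    {u : ℕ → H} {C : ℝ} (hu : ∀ n, ‖u n‖ ≤ C) :
    ∃ φ : ℕ → ℕ, StrictMono φ ∧ ∃ v, TendstoWeakly (fun n => u (φ n)) atTop v := by
  let f : ℕ → WeakDual ℝ H := fun n => StrongDual.toWeakDual (InnerProductSpace.toDual ℝ H (u n))
  have hf : ∀ n, f n ∈ WeakDual.toStrongDual ⁻¹' Metric.closedBall 0 C := fun n => by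
    simpa [f] using hu n
  obtain ⟨a, -, φ, hφ, hlim⟩ := WeakDual.isSeqCompact_closedBall ℝ H 0 C hf
  refine ⟨φ, hφ, (InnerProductSpace.toDual ℝ H).symm (WeakDual.toStrongDual a), fun y => ?_⟩
  rw [InnerProductSpace.toDual_symm_apply]
  exact ((WeakDual.eval_continuous y).tendsto a).comp hlim

theorem exists_tendstoWeakly_subseq [CompleteSpace H] {u : ℕ → H} {C : ℝ}
    (hu : ∀ n, ‖u n‖ ≤ C) :
    ∃ φ : ℕ → ℕ, StrictMono φ ∧ ∃ v, TendstoWeakly (fun n => u (φ n)) atTop v := by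
  let K : Submodule ℝ H := (Submodule.span ℝ (Set.range u)).topologicalClosure
  have : CompleteSpace K :=
    (Submodule.span ℝ (Set.range u)).isClosed_topologicalClosure.completeSpace_coe
  have : SeparableSpace K :=
    ((Set.countable_range u).isSeparable.span.closure).separableSpace
  let uK : ℕ → K := fun n =>
    ⟨u n, Submodule.le_topologicalClosure _ (Submodule.subset_span (Set.mem_range_self n))⟩
  obtain ⟨φ, hφ, v, hv⟩ := exists_tendstoWeakly_subseq_of_separableSpace (u := uK) hu
  -- Against `y`, elements of `K` only see the orthogonal projection of `y` onto `K`.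
  refine ⟨φ, hφ, v, fun y => ?_⟩
  simpa only [Submodule.inner_orthogonalProjectionOnto_eq_of_mem_left] using
    hv (K.orthogonalProjectionOnto y)

theorem tendsto_inner_sub_of_tendsto_norm_sub {α : Type*} {l : Filter α} {x : α → H}
    {z w : H} {a b : ℝ} (ha : Tendsto (fun t => ‖x t - z‖) l (𝓝 a))
    (hb : Tendsto (fun t => ‖x t - w‖) l (𝓝 b)) :
    Tendsto (fun t => ⟪x t, z - w⟫_ℝ) l (𝓝 ((b ^ 2 - a ^ 2 + ‖z‖ ^ 2 - ‖w‖ ^ 2) / 2)) := by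
  have polarization : ∀ t, ⟪x t, z - w⟫_ℝ =
      (‖x t - w‖ ^ 2 - ‖x t - z‖ ^ 2 + ‖z‖ ^ 2 - ‖w‖ ^ 2) / 2 := fun t => by
    rw [inner_sub_right, norm_sub_sq_real, norm_sub_sq_real]
    ring
  simpa only [polarization] using
    ((((hb.pow 2).sub (ha.pow 2)).add_const _).sub_const _).div_const 2

theorem eq_of_tendstoWeakly_of_tendsto_norm_sub {α : Type*} {l : Filter α} {x : α → H}
    {s s' : ℕ → α} (hs : Tendsto s atTop l) (hs' : Tendsto s' atTop l) {z w : H}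
    (hz : TendstoWeakly (fun n => x (s n)) atTop z)
    (hw : TendstoWeakly (fun n => x (s' n)) atTop w) {a b : ℝ}
    (ha : Tendsto (fun t => ‖x t - z‖) l (𝓝 a)) (hb : Tendsto (fun t => ‖x t - w‖) l (𝓝 b)) :
    z = w := by
  have hlim := tendsto_inner_sub_of_tendsto_norm_sub ha hb
  have hz' := tendsto_nhds_unique (hz (z - w)) (hlim.comp hs)
  have hw' := tendsto_nhds_unique (hw (z - w)) (hlim.comp hs')
  have : ⟪z - w, z - w⟫_ℝ = 0 := by rw [inner_sub_left, hz', hw', sub_self]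
  exact sub_eq_zero.mp (inner_self_eq_zero.mp this)

end

theorem opial_lemma
    {H : Type*} [NormedAddCommGroup H] [InnerProductSpace ℝ H] [CompleteSpace H]
    (t₀ : ℝ) (x : ℝ → H) (S : Set H) (hS : S.Nonempty)
    (h1 : ∀ (tn : ℕ → ℝ) (xbar : H), (∀ n, t₀ ≤ tn n) → Tendsto tn atTop atTop →
      (∀ y : H, Tendsto (fun n => (inner ℝ (x (tn n)) y : ℝ)) atTop (nhds (inner ℝ xbar y))) →
      xbar ∈ S)
    (h2 : ∀ z ∈ S, ∃ l : ℝ, Tendsto (fun t => ‖x t - z‖) atTop (nhds l)) :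
    ∃ zlim ∈ S, ∀ y : H,
      Tendsto (fun t => (inner ℝ (x t) y : ℝ)) atTop (nhds (inner ℝ zlim y)) := by
  obtain ⟨z₀, hz₀⟩ := hS
  obtain ⟨C, hC⟩ := (h2 z₀ hz₀).choose_spec.exists_eventually_norm_le
  have subseq_limit_mem : ∀ s : ℕ → ℝ, Tendsto s atTop atTop →
      ∃ φ : ℕ → ℕ, StrictMono φ ∧ ∃ w ∈ S, TendstoWeakly (fun n => x (s (φ n))) atTop w := by
    intro s hs
    obtain ⟨φ, hφ, hφs⟩ :=
      extraction_of_eventually_atTop (hs.eventually ((eventually_ge_atTop t₀).and hC))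
    obtain ⟨ψ, hψ, w, hw⟩ := exists_tendstoWeakly_subseq fun n => (hφs n).2
    have hsφψ : Tendsto (fun n => s (φ (ψ n))) atTop atTop := hs.comp (hφ.comp hψ).tendsto_atTop
    exact ⟨φ ∘ ψ, hφ.comp hψ, w, h1 _ w (fun n => (hφs (ψ n)).1) hsφψ hw, hw⟩
  obtain ⟨φ, hφ, z, hzS, hz⟩ := subseq_limit_mem _ tendsto_natCast_atTop_atTop
  refine ⟨z, hzS, fun y => tendsto_of_subseq_tendsto fun s hs => ?_⟩
  obtain ⟨ψ, hψ, w, hwS, hw⟩ := subseq_limit_mem s hs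
  obtain rfl : z = w := eq_of_tendstoWeakly_of_tendsto_norm_sub
    (tendsto_natCast_atTop_atTop.comp hφ.tendsto_atTop) (hs.comp hψ.tendsto_atTop) hz hw
    (h2 z hzS).choose_spec (h2 w hwS).choose_spec
  exact ⟨ψ, hw y⟩
end

section
/- Let Φ : V → ℝ be a C¹ convex function on a Hilbert space V with gradient ∇Φ (as a map V → V'). Suppose there exist x* ∈ V and r > 0 such that ∇Φ(x* + r v) = 0 for every v in the closed unit ball of V. Then for every x ∈ V: ‖∇Φ(x)‖_{V'} ≤ (1/r) ⟨∇Φ(x), x − x*⟩. -/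
open Set

/-- Monotonicity of the gradient of a convex function. -/
lemma grad_mono_aux
    {V : Type*} [NormedAddCommGroup V] [InnerProductSpace ℝ V]
    (Φ : V → ℝ) (dΦ : V → (V →L[ℝ] ℝ))
    (hdiff : ∀ x : V, HasFDerivAt Φ (dΦ x) x)
    (hconv : ConvexOn ℝ univ Φ) (x y : V) :
    dΦ x (y - x) ≤ dΦ y (y - x) := by
  set g : ℝ → ℝ := fun t => Φ (x + t • (y - x)) with hg
  have hline : ∀ t : ℝ, HasDerivAt (fun t : ℝ => x + t • (y - x)) (y - x) t := by
    intro t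
    simpa using ((hasDerivAt_id t).smul_const (y - x)).const_add x
  have hgd : ∀ t : ℝ, HasDerivAt g (dΦ (x + t • (y - x)) (y - x)) t := by
    intro t
    exact (hdiff (x + t • (y - x))).comp_hasDerivAt t (hline t)
  have hgc : ConvexOn ℝ univ g := by
    have h := hconv.comp_affineMap (AffineMap.lineMap x y : ℝ →ᵃ[ℝ] V)
    have heq : (Φ ∘ (AffineMap.lineMap x y : ℝ →ᵃ[ℝ] V)) = g := by
      funext t
      simp [hg, AffineMap.lineMap_apply, add_comm, sub_eq_neg_add]
    rw [heq] at h
    simpa using h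
  have hmono := hgc.monotoneOn_deriv (fun t _ => (hgd t).differentiableAt)
  have h01 := hmono (mem_univ (0:ℝ)) (mem_univ (1:ℝ)) zero_le_one
  rw [(hgd 0).deriv, (hgd 1).deriv] at h01
  simpa using h01

theorem grad_norm_bound_of_ball_in_critical
    {V : Type*} [NormedAddCommGroup V] [InnerProductSpace ℝ V] [CompleteSpace V]
    (Φ : V → ℝ) (dΦ : V → (V →L[ℝ] ℝ))
    (hdiff : ∀ x : V, HasFDerivAt Φ (dΦ x) x)
    (hconv : ConvexOn ℝ univ Φ)
    (xstar : V) (r : ℝ) (hr : 0 < r)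
    (hball : ∀ v : V, ‖v‖ ≤ 1 → dΦ (xstar + r • v) = 0) :
    ∀ x : V, ‖dΦ x‖ ≤ (1 / r) * (dΦ x) (x - xstar) := by
  intro x
  have key : ∀ v : V, ‖v‖ ≤ 1 → r * dΦ x v ≤ dΦ x (x - xstar) := by
    intro v hv
    have h := grad_mono_aux Φ dΦ hdiff hconv (xstar + r • v) x
    rw [hball v hv] at h
    simp only [ContinuousLinearMap.zero_apply] at h
    have h2 : dΦ x (x - (xstar + r • v)) = dΦ x (x - xstar) - r * dΦ x v := by
      rw [show x - (xstar + r • v) = (x - xstar) - r • v by abel]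
      simp [map_sub]
    linarith [h2 ▸ h]
  have hnn : 0 ≤ dΦ x (x - xstar) := by
    have h0 := key 0 (by simp)
    simpa using h0
  apply ContinuousLinearMap.opNorm_le_bound
  · positivity
  · intro w
    rcases eq_or_ne w 0 with rfl | hw
    · simp
    · have hwn : (0:ℝ) < ‖w‖ := norm_pos_iff.mpr hw
      have hu : ‖‖w‖⁻¹ • w‖ ≤ 1 := by
        rw [norm_smul, norm_inv, norm_norm, inv_mul_cancel₀ hwn.ne']
      have h1 := key (‖w‖⁻¹ • w) hu
      have h2 := key (-(‖w‖⁻¹ • w)) (by rwa [norm_neg])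
      simp only [map_smul, map_neg, smul_eq_mul, mul_neg] at h1 h2
      have h1' : r * dΦ x w ≤ ‖w‖ * dΦ x (x - xstar) := by
        have h := mul_le_mul_of_nonneg_left h1 hwn.le
        rw [show ‖w‖ * (r * (‖w‖⁻¹ * dΦ x w)) = (‖w‖ * ‖w‖⁻¹) * (r * dΦ x w) by ring,
          mul_inv_cancel₀ hwn.ne', one_mul] at h
        exact h
      have h2' : -(r * dΦ x w) ≤ ‖w‖ * dΦ x (x - xstar) := by
        have h := mul_le_mul_of_nonneg_left h2 hwn.le
        rw [show ‖w‖ * -(r * (‖w‖⁻¹ * dΦ x w)) = (‖w‖ * ‖w‖⁻¹) * -(r * dΦ x w) by ring,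
          mul_inv_cancel₀ hwn.ne', one_mul] at h
        exact h
      have hrr : r * (1/r) = 1 := mul_one_div_cancel hr.ne'
      have habs : |dΦ x w| ≤ ‖w‖ * ((1/r) * dΦ x (x - xstar)) := by
        rw [abs_le]
        constructor
        · nlinarith [h2', hr, hrr]
        · nlinarith [h1', hr, hrr]
      calc ‖dΦ x w‖ = |dΦ x w| := rfl
        _ ≤ ‖w‖ * ((1/r) * dΦ x (x - xstar)) := habs
        _ = (1/r) * dΦ x (x - xstar) * ‖w‖ := by ring
end
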